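/- The generalized row sum rating of a team is strictly increasing in its own score: for ε > 0, every diagonal entry of (I + εL)⁻¹ is strictly positive; consequently, if s'_i > s_i and s'_j = s_j for all j ≠ i, then x_i(ε; s') > x_i(ε; s). -/

import Mathlib

/-!
For a symmetric nonnegative `M`, the quadratic form of the Laplacian is
`vᵀ L v = ½ ∑ᵢⱼ Mᵢⱼ (vᵢ - vⱼ)²`, so `L` is positive semidefinite and `A = I + εL` is positive
definite for `ε > 0`. Hence `A⁻¹` is positive definite and has a positive diagonal. Raising the score
of team `i` alone by `c` changes the ratings by `c • A⁻¹ eᵢ`, i.e. `xᵢ` grows by `c · (A⁻¹)ᵢᵢ > 0`.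
-/

open Matrix Finset

def lap {n : ℕ} (M : Matrix (Fin n) (Fin n) ℝ) : Matrix (Fin n) (Fin n) ℝ :=
  Matrix.of fun i j => if i = j then ∑ k ∈ Finset.univ.erase i, M i k else -M i j

section Laplacian

variable {n : ℕ} {M : Matrix (Fin n) (Fin n) ℝ}

lemma lap_mulVec_apply (v : Fin n → ℝ) (i : Fin n) :
    (lap M *ᵥ v) i = ∑ j, M i j * (v i - v j) := by
  rw [← Finset.add_sum_erase _ _ (Finset.mem_univ i), sub_self, mul_zero, zero_add]
  simp only [mulVec, dotProduct, lap, of_apply]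
  rw [← Finset.add_sum_erase _ _ (Finset.mem_univ i), if_pos rfl, Finset.sum_mul,
    ← Finset.sum_add_distrib]
  refine Finset.sum_congr rfl fun j hj => ?_
  rw [if_neg (Finset.ne_of_mem_erase hj).symm]
  ring

lemma lap_isSymm (hsymm : M.IsSymm) : (lap M).IsSymm := by
  ext i j
  simp only [transpose_apply, lap, of_apply, eq_comm (a := j)]
  split_ifs with h
  · subst h; rfl
  · rw [hsymm.apply]

lemma two_mul_dotProduct_lap_mulVec (hsymm : M.IsSymm) (v : Fin n → ℝ) :
    2 * (v ⬝ᵥ (lap M *ᵥ v)) = ∑ i, ∑ j, M i j * (v i - v j) ^ 2 := by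
  have hrow : v ⬝ᵥ (lap M *ᵥ v) = ∑ i, ∑ j, M i j * (v i * (v i - v j)) := by
    simp only [dotProduct, lap_mulVec_apply, Finset.mul_sum, mul_left_comm]
  have hcol : v ⬝ᵥ (lap M *ᵥ v) = ∑ i, ∑ j, M i j * (v j * (v j - v i)) := by
    rw [hrow, Finset.sum_comm]
    simp only [hsymm.apply]
  rw [two_mul]
  nth_rewrite 1 [hrow]
  rw [hcol, ← Finset.sum_add_distrib]
  refine Finset.sum_congr rfl fun i _ => ?_
  rw [← Finset.sum_add_distrib]
  refine Finset.sum_congr rfl fun j _ => ?_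
  ring

lemma lap_posSemidef (hsymm : M.IsSymm) (hnonneg : ∀ i j, 0 ≤ M i j) : (lap M).PosSemidef := by
  refine .of_dotProduct_mulVec_nonneg (lap_isSymm hsymm) fun v => ?_
  have hsum : 0 ≤ ∑ i, ∑ j, M i j * (v i - v j) ^ 2 :=
    Finset.sum_nonneg fun i _ => Finset.sum_nonneg fun j _ =>
      mul_nonneg (hnonneg i j) (sq_nonneg _)
  rw [star_trivial]
  linarith [two_mul_dotProduct_lap_mulVec hsymm v]

lemma posDef_one_add_smul_lap (hsymm : M.IsSymm) (hnonneg : ∀ i j, 0 ≤ M i j)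
    {ε : ℝ} (hε : 0 ≤ ε) : (1 + ε • lap M).PosDef :=
  PosDef.one.add_posSemidef ((lap_posSemidef hsymm hnonneg).smul hε)

end Laplacian

lemma Matrix.sub_apply_eq_inv_apply_self_mul_of_mulVec_eq {ι R : Type*} [Fintype ι]
    [DecidableEq ι] [CommRing R] {A : Matrix ι ι R} (hA : IsUnit A.det) {x x' s s' : ι → R}
    {i : ι} (hx : A *ᵥ x = s) (hx' : A *ᵥ x' = s') (hs : ∀ j, j ≠ i → s' j = s j) :
    x' i - x i = A⁻¹ i i * (s' i - s i) := by
  have hds : s' - s = Pi.single i (s' i - s i) := by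
    ext j
    rcases eq_or_ne j i with rfl | hj
    · simp
    · simp [hj, hs j hj]
  have hdx : x' - x = A⁻¹ *ᵥ (s' - s) := by
    rw [← hx, ← hx', ← mulVec_sub, mulVec_mulVec, nonsing_inv_mul A hA, one_mulVec]
  simpa [hds] using congrFun hdx i

theorem grs_strictly_increasing_in_own_score_general
    (n : ℕ) (M : Matrix (Fin n) (Fin n) ℝ)
    (hsymm : M.IsSymm) (hnonneg : ∀ i j, 0 ≤ M i j)
    (ε : ℝ) (hε : 0 < ε) (s s' x x' : Fin n → ℝ) (i : Fin n)
    (hsi : s' i > s i) (hsj : ∀ j, j ≠ i → s' j = s j)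
    (hx : (1 + ε • lap M) *ᵥ x = s)
    (hx' : (1 + ε • lap M) *ᵥ x' = s') :
    (∀ k : Fin n, 0 < (1 + ε • lap M)⁻¹ k k) ∧ x' i > x i := by
  have hA := posDef_one_add_smul_lap hsymm hnonneg hε.le
  have hdiag : ∀ k, 0 < (1 + ε • lap M)⁻¹ k k := fun _ => hA.inv.diag_pos
  refine ⟨hdiag, ?_⟩
  have hgain := sub_apply_eq_inv_apply_self_mul_of_mulVec_eq hA.det_pos.ne'.isUnit hx hx' hsj
  linarith [mul_pos (hdiag i) (sub_pos.2 hsi)]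

/-- The generalized row sum rating of a team is strictly increasing in its own score:
every diagonal entry of `(I + εL)⁻¹` is strictly positive; consequently, if `s' i > s i`
and `s' j = s j` for all `j ≠ i`, then `x' i > x i`. -/
theorem grs_strictly_increasing_in_own_score
    (n : ℕ) (hn : 1 ≤ n) (M : Matrix (Fin n) (Fin n) ℝ)
    (hsymm : M.IsSymm) (hnonneg : ∀ i j, 0 ≤ M i j) (hdiag : ∀ i, M i i = 0)
    (ε : ℝ) (hε : 0 < ε) (s s' x x' : Fin n → ℝ) (i : Fin n)
    (hsi : s' i > s i) (hsj : ∀ j, j ≠ i → s' j = s j)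
    (hx : (1 + ε • lap M) *ᵥ x = s)
    (hx' : (1 + ε • lap M) *ᵥ x' = s') :
    (∀ k : Fin n, 0 < (1 + ε • lap M)⁻¹ k k) ∧ x' i > x i :=
  grs_strictly_increasing_in_own_score_general n M hsymm hnonneg ε hε s s' x x' i hsi hsj hx hx'
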